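/- arXiv:2406.03999 — 5 statements merged into one kernel-verified Lean document; each statement's English description precedes it below -/
import Mathlib

section
/- The matrix entropy of E(1/(C−1)²) equals (2 − 1/(C−1))·log(C−1) − ((C−2)/(C−1))·log(C−2), for C ≥ 3. -/
open Matrix


/-- The C×C matrix with 1 on the diagonal and α off the diagonal. -/
def simplexE (C : ℕ) (α : ℝ) : Matrix (Fin C) (Fin C) ℝ :=
  Matrix.of fun i j => if i = j then 1 else α

/-- Matrix entropy: H(K) = −∑ λᵢ log λᵢ where λᵢ are the eigenvalues of (1/n)·K. -/
noncomputable def matEnt {m : Type*} [Fintype m] [DecidableEq m] (K : Matrix m m ℝ)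
    (hK : (((Fintype.card m : ℝ))⁻¹ • K).IsHermitian) : ℝ :=
  -∑ i, hK.eigenvalues i * Real.log (hK.eigenvalues i)

/-- The matrix entropy of E(1/(C−1)²) equals (2 − 1/(C−1))·log(C−1) − ((C−2)/(C−1))·log(C−2),
for C ≥ 3. -/
theorem matEnt_simplexE_hadamardSquare (C : ℕ) (hC : 3 ≤ C)
    (h : (((Fintype.card (Fin C) : ℝ))⁻¹ • simplexE C (1 / ((C : ℝ) - 1) ^ 2)).IsHermitian) :
    matEnt _ h =
      (2 - 1 / ((C : ℝ) - 1)) * Real.log ((C : ℝ) - 1)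
        - (((C : ℝ) - 2) / ((C : ℝ) - 1)) * Real.log ((C : ℝ) - 2) := by
  classical
  have hc3 : (3:ℝ) ≤ (C:ℝ) := by exact_mod_cast hC
  set c : ℝ := (C:ℝ) with hc_def
  have hc0 : c ≠ 0 := by intro hx; nlinarith
  have hc1 : c - 1 ≠ 0 := by intro hx; nlinarith
  have hc2 : c - 2 ≠ 0 := by intro hx; nlinarith
  set α : ℝ := 1 / (c - 1) ^ 2 with hα
  set A : Matrix (Fin C) (Fin C) ℝ :=
    ((Fintype.card (Fin C) : ℝ))⁻¹ • simplexE C α with hA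
  set l1 : ℝ := (c - 2) / (c - 1) ^ 2 with hl1
  set l2 : ℝ := 1 / (c - 1) with hl2
  -- entries of A
  have hAentry : ∀ i j : Fin C, A i j = c⁻¹ * (if i = j then 1 else α) := by
    intro i j
    simp [hA, simplexE, Matrix.smul_apply, Fintype.card_fin]
    rfl
  -- sum of an ite over Fin C
  have hsum_ite : ∀ (j : Fin C) (x y : ℝ),
      (∑ k : Fin C, (if k = j then x else y)) = x + (c - 1) * y := by
    intro j x y
    have e : ∀ k : Fin C, (if k = j then x else y) = y + (if k = j then x - y else 0) := by
      intro k; split <;> ring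
    rw [Finset.sum_congr rfl fun k _ => e k, Finset.sum_add_distrib,
      Finset.sum_const, Finset.sum_ite_eq' Finset.univ j fun _ => x - y]
    simp [Fintype.card_fin]
    ring
  -- key quadratic identity
  have hB1 : ∀ i k : Fin C, (A - l1 • 1) i k = α / c := by
    intro i k
    simp only [Matrix.sub_apply, Matrix.smul_apply, Matrix.one_apply, hAentry]
    split
    · rw [hα, hl1]; rw [smul_eq_mul, mul_one]; field_simp; ring
    · rw [smul_eq_mul, mul_zero]; ring
  have hcol : ∀ j : Fin C, (∑ k, (A - l2 • 1) k j) = 0 := by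
    intro j
    have e : ∀ k : Fin C, (A - l2 • 1) k j
        = (if k = j then c⁻¹ - l2 else c⁻¹ * α) := by
      intro k
      simp only [Matrix.sub_apply, Matrix.smul_apply, Matrix.one_apply, hAentry]
      split <;> simp
    rw [Finset.sum_congr rfl fun k _ => e k, hsum_ite]
    rw [hl2, hα]; field_simp; ring
  have hkey : (A - l1 • 1) * (A - l2 • 1) = 0 := by
    ext i j
    rw [Matrix.mul_apply]
    simp only [hB1, ← Finset.mul_sum, hcol, mul_zero, Matrix.zero_apply]
  -- every eigenvalue is l1 or l2
  have hmem : ∀ i, h.eigenvalues i = l1 ∨ h.eigenvalues i = l2 := by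
    intro i
    set μ := h.eigenvalues i with hμ
    set v := ⇑(h.eigenvectorBasis i) with hv
    have hv0 : v ≠ 0 := by
      have hne := h.eigenvectorBasis.orthonormal.ne_zero i
      intro hcon
      apply hne
      ext k
      exact congrFun hcon k
    have hAv : A *ᵥ v = μ • v := h.mulVec_eigenvectorBasis i
    have h2 : (A - l2 • 1) *ᵥ v = (μ - l2) • v := by
      rw [Matrix.sub_mulVec, hAv, Matrix.smul_mulVec, Matrix.one_mulVec, sub_smul]
    have h1 : (A - l1 • 1) *ᵥ ((μ - l2) • v) = ((μ - l1) * (μ - l2)) • v := by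
      rw [Matrix.mulVec_smul, Matrix.sub_mulVec, hAv, Matrix.smul_mulVec,
        Matrix.one_mulVec, ← sub_smul, smul_smul, mul_comm]
    have hz : ((μ - l1) * (μ - l2)) • v = 0 := by
      rw [← h1, ← h2, Matrix.mulVec_mulVec, hkey, Matrix.zero_mulVec]
    rcases smul_eq_zero.mp hz with hz | hz
    · rcases mul_eq_zero.mp hz with hz | hz
      · left; linarith [sub_eq_zero.mp hz]
      · right; linarith [sub_eq_zero.mp hz]
    · exact absurd hz hv0
  -- trace
  have htr : (∑ i, h.eigenvalues i) = 1 := by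
    have hU : star (h.eigenvectorUnitary : Matrix (Fin C) (Fin C) ℝ) *
        (h.eigenvectorUnitary : Matrix (Fin C) (Fin C) ℝ) = 1 := by
      exact_mod_cast Unitary.coe_star_mul_self h.eigenvectorUnitary
    have t1 : A.trace = ∑ i, h.eigenvalues i := by
      conv_lhs => rw [h.spectral_theorem, Unitary.conjStarAlgAut_apply]
      rw [Matrix.trace_mul_cycle, hU, Matrix.one_mul, Matrix.trace_diagonal]
      simp
    have t2 : A.trace = 1 := by
      rw [Matrix.trace]
      have e : ∀ i : Fin C, A.diag i = c⁻¹ := by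
        intro i; rw [Matrix.diag_apply, hAentry]; simp
      rw [Finset.sum_congr rfl fun i _ => e i, Finset.sum_const, Finset.card_univ,
        Fintype.card_fin, nsmul_eq_mul, ← hc_def]
      field_simp
    rw [← t1, t2]
  -- linear interpolation trick
  set g1 : ℝ := l1 * Real.log l1 with hg1
  set g2 : ℝ := l2 * Real.log l2 with hg2
  set a : ℝ := (g2 - g1) * (c - 1) ^ 2 with ha
  set b : ℝ := g1 - a * l1 with hb
  have hinterp : ∀ i, h.eigenvalues i * Real.log (h.eigenvalues i)
      = a * h.eigenvalues i + b := by
    intro i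
    rcases hmem i with hi | hi
    · rw [hi, ← hg1, hb]; ring
    · rw [hi, ← hg2, hb, ha, hl1, hl2]; field_simp; ring
  have hsum : (∑ i, h.eigenvalues i * Real.log (h.eigenvalues i)) = a + c * b := by
    rw [Finset.sum_congr rfl fun i _ => hinterp i, Finset.sum_add_distrib,
      ← Finset.mul_sum, htr, Finset.sum_const, Finset.card_univ, Fintype.card_fin,
      nsmul_eq_mul, ← hc_def, mul_one]
  -- conclude
  have final : matEnt (simplexE C α) h =
      (2 - 1 / (c - 1)) * Real.log (c - 1) - ((c - 2) / (c - 1)) * Real.log (c - 2) := by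
    rw [matEnt, hsum]
    have hlog1 : Real.log l1 = Real.log (c - 2) - 2 * Real.log (c - 1) := by
      rw [hl1, Real.log_div hc2 (pow_ne_zero 2 hc1), Real.log_pow]
      push_cast; ring
    have hlog2 : Real.log l2 = -Real.log (c - 1) := by
      rw [hl2, Real.log_div one_ne_zero hc1, Real.log_one]; ring
    rw [hb, ha, hg1, hg2, hlog1, hlog2, hl1, hl2]
    field_simp
    ring
  exact final
end

section
/- If K₁ = K₂ = E(−1/(C−1)) with C ≥ 3, then the matrix mutual information ratio MIR(K₁, K₂) = MI(K₁,K₂)/min{H(K₁),H(K₂)} equals 1/(C−1) + ((C−2)log(C−2))/((C−1)log(C−1)). -/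
open Matrix in
lemma trace_eq_sum_eig {n : Type*} [Fintype n] [DecidableEq n] {A : Matrix n n ℝ}
    (hA : A.IsHermitian) : A.trace = ∑ i, hA.eigenvalues i := by
  simpa using hA.trace_eq_sum_eigenvalues

open Matrix in
lemma eig_quad {n : Type*} [Fintype n] [DecidableEq n] {A : Matrix n n ℝ} (hA : A.IsHermitian)
    (c d : ℝ) (h : A * A = c • A + d • (1 : Matrix n n ℝ)) (i : n) :
    hA.eigenvalues i ^ 2 = c * hA.eigenvalues i + d := by
  have hv := hA.mulVec_eigenvectorBasis i
  have hv2 : (A * A) *ᵥ ⇑(hA.eigenvectorBasis i)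
      = (hA.eigenvalues i ^ 2) • ⇑(hA.eigenvectorBasis i) := by
    rw [← mulVec_mulVec, hv, mulVec_smul, hv, smul_smul, sq]
  rw [h] at hv2
  have hnz : ⇑(hA.eigenvectorBasis i) ≠ (0 : n → ℝ) := by
    intro h0
    exact hA.eigenvectorBasis.orthonormal.ne_zero i (by ext j; exact congrFun h0 j)
  obtain ⟨j, hj⟩ := Function.ne_iff.mp hnz
  have := congrFun hv2 j
  simp only [add_mulVec, smul_mulVec, hv, one_mulVec, Pi.add_apply, Pi.smul_apply,
    smul_eq_mul] at this
  have hj' : (hA.eigenvectorBasis i).ofLp j ≠ 0 := by simpa using hj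
  refine mul_right_cancel₀ hj' ?_
  linear_combination -this

open Matrix in
lemma simplexE_sq (C : ℕ) (α : ℝ) :
    simplexE C α * simplexE C α
      = ((1+((C:ℝ)-1)*α) + (1-α)) • simplexE C α
        - ((1+((C:ℝ)-1)*α)*(1-α)) • (1 : Matrix (Fin C) (Fin C) ℝ) := by
  ext i j
  have key : ∀ k : Fin C, (if i = k then (1:ℝ) else α) * (if k = j then 1 else α)
      = α^2 + α*(1-α)*((if i = k then (1:ℝ) else 0) + (if k = j then (1:ℝ) else 0))
        + (1-α)^2*((if i = k then (1:ℝ) else 0) * (if k = j then (1:ℝ) else 0)) := by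
    intro k; split_ifs <;> ring
  have hij : ∀ k : Fin C, (if i = k then (1:ℝ) else 0) * (if k = j then (1:ℝ) else 0)
      = if i = k then (if i = j then (1:ℝ) else 0) else 0 := by
    intro k
    split_ifs with h1 h2 h3 <;> first | rfl | (exfalso; subst h1; tauto) | simp
  simp only [Matrix.mul_apply, simplexE, Matrix.of_apply, Matrix.sub_apply, Matrix.smul_apply,
    Matrix.one_apply, smul_eq_mul]
  rw [Finset.sum_congr rfl (fun k _ => key k)]
  have s1 : ∑ x : Fin C, ((if i = x then (1:ℝ) else 0) + if x = j then 1 else 0) = 2 := by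
    rw [Finset.sum_add_distrib]
    simp
    norm_num
  have s2 : ∑ x : Fin C, ((if i = x then (1:ℝ) else 0) * if x = j then 1 else 0)
      = if i = j then 1 else 0 := by
    rw [Finset.sum_congr rfl (fun k _ => hij k)]
    simp
  rw [Finset.sum_add_distrib, Finset.sum_add_distrib, ← Finset.mul_sum, ← Finset.mul_sum,
    s1, s2, Finset.sum_const, Finset.card_univ, Fintype.card_fin, nsmul_eq_mul]
  split_ifs <;> ring

lemma simplexE_trace (C : ℕ) (α : ℝ) : (simplexE C α).trace = C := by
  simp [Matrix.trace, Matrix.diag, simplexE]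

open Matrix in
lemma simplexE_hadamard (C : ℕ) (α : ℝ) : simplexE C α ⊙ simplexE C α = simplexE C (α^2) := by
  ext i j; simp only [Matrix.hadamard_apply, simplexE, Matrix.of_apply]; split_ifs <;> ring

open Matrix in
lemma scaled_sq (C : ℕ) (hC0 : (C:ℝ) ≠ 0) (α : ℝ) :
    ((C:ℝ)⁻¹ • simplexE C α) * ((C:ℝ)⁻¹ • simplexE C α)
      = (((1+((C:ℝ)-1)*α) + (1-α))/C) • ((C:ℝ)⁻¹ • simplexE C α)
        + (-((1+((C:ℝ)-1)*α)*(1-α))/C^2) • (1 : Matrix (Fin C) (Fin C) ℝ) := by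
  rw [Matrix.smul_mul, Matrix.mul_smul, simplexE_sq]
  match_scalars <;> ring

open Matrix in
/-- With K₁ = K₂ = E(−1/(C−1)) and C ≥ 3, the matrix mutual information ratio
MIR(K₁,K₂) = (H(K₁)+H(K₂)−H(K₁⊙K₂)) / min{H(K₁),H(K₂)} equals
1/(C−1) + ((C−2)·log(C−2))/((C−1)·log(C−1)). -/
theorem MIR_neuralCollapse (C : ℕ) (hC : 3 ≤ C)
    (K₁ K₂ : Matrix (Fin C) (Fin C) ℝ)
    (hK₁ : K₁ = simplexE C (-1 / ((C : ℝ) - 1)))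
    (hK₂ : K₂ = simplexE C (-1 / ((C : ℝ) - 1)))
    (h1 : (((Fintype.card (Fin C) : ℝ))⁻¹ • K₁).IsHermitian)
    (h2 : (((Fintype.card (Fin C) : ℝ))⁻¹ • K₂).IsHermitian)
    (h12 : (((Fintype.card (Fin C) : ℝ))⁻¹ • (K₁ ⊙ K₂)).IsHermitian) :
    (matEnt K₁ h1 + matEnt K₂ h2 - matEnt (K₁ ⊙ K₂) h12)
        / min (matEnt K₁ h1) (matEnt K₂ h2) =
      1 / ((C : ℝ) - 1)
        + (((C : ℝ) - 2) * Real.log ((C : ℝ) - 2))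
            / ((((C : ℝ) - 1)) * Real.log ((C : ℝ) - 1)) := by
  have hC3 : (3:ℝ) ≤ (C:ℝ) := by exact_mod_cast hC
  have hc1 : (0:ℝ) < (C:ℝ) - 1 := by linarith
  have hc2 : (0:ℝ) < (C:ℝ) - 2 := by linarith
  have hc1' : (C:ℝ) - 1 ≠ 0 := ne_of_gt hc1
  have hc2' : (C:ℝ) - 2 ≠ 0 := ne_of_gt hc2
  have hC0 : (C:ℝ) ≠ 0 := by positivity
  have hL1pos : 0 < Real.log ((C:ℝ) - 1) := Real.log_pos (by linarith)
  have hL1 : Real.log ((C:ℝ) - 1) ≠ 0 := ne_of_gt hL1pos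
  set α : ℝ := -1 / ((C : ℝ) - 1) with hα
  set a : ℝ := ((C:ℝ) - 1)⁻¹ with ha
  set b : ℝ := ((C:ℝ) - 2) / ((C:ℝ) - 1)^2 with hb
  set L1 : ℝ := Real.log ((C:ℝ) - 1) with hL1def
  set L2 : ℝ := Real.log ((C:ℝ) - 2) with hL2def
  -- identify the matrices
  have hMK : ((Fintype.card (Fin C) : ℝ))⁻¹ • K₁ = (C:ℝ)⁻¹ • simplexE C α := by
    rw [Fintype.card_fin, hK₁]
  have hMK2 : ((Fintype.card (Fin C) : ℝ))⁻¹ • K₂ = (C:ℝ)⁻¹ • simplexE C α := by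
    rw [Fintype.card_fin, hK₂]
  have hHad : K₁ ⊙ K₂ = simplexE C (α^2) := by
    rw [hK₁, hK₂]; exact simplexE_hadamard C α
  have hMP : ((Fintype.card (Fin C) : ℝ))⁻¹ • (K₁ ⊙ K₂) = (C:ℝ)⁻¹ • simplexE C (α^2) := by
    rw [Fintype.card_fin, hHad]
  -- entropy of K₁ (and K₂)
  have hEnt1 : ∀ (K : Matrix (Fin C) (Fin C) ℝ)
      (hK : (((Fintype.card (Fin C) : ℝ))⁻¹ • K).IsHermitian)
      (hMKeq : ((Fintype.card (Fin C) : ℝ))⁻¹ • K = (C:ℝ)⁻¹ • simplexE C α),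
      matEnt K hK = L1 := by
    intro K hK hMKeq
    have hquad : ∀ i, hK.eigenvalues i ^ 2 = a * hK.eigenvalues i + 0 := by
      intro i
      refine eig_quad hK a 0 ?_ i
      rw [hMKeq]
      have e1 : (((1+((C:ℝ)-1)*α) + (1-α))/C) = a := by
        rw [hα, ha]; field_simp; try ring
      have e2 : (-((1+((C:ℝ)-1)*α)*(1-α))/(C:ℝ)^2) = 0 := by
        rw [hα]; field_simp; ring
      rw [scaled_sq C hC0 α, e1, e2]
    have hcases : ∀ i, hK.eigenvalues i = 0 ∨ hK.eigenvalues i = a := by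
      intro i
      have h := hquad i
      have : hK.eigenvalues i * (hK.eigenvalues i - a) = 0 := by linear_combination h
      rcases mul_eq_zero.mp this with h' | h'
      · exact Or.inl h'
      · exact Or.inr (by linarith [sub_eq_zero.mp h'])
    have htr : ∑ i, hK.eigenvalues i = 1 := by
      rw [← trace_eq_sum_eig hK, hMKeq, Matrix.trace_smul, simplexE_trace]
      simp [hC0]
    have hsum : ∑ i, hK.eigenvalues i * Real.log (hK.eigenvalues i)
        = ∑ i, hK.eigenvalues i * Real.log a := by
      refine Finset.sum_congr rfl fun i _ => ?_
      rcases hcases i with h' | h' <;> rw [h'] <;> simp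
    rw [matEnt, hsum, ← Finset.sum_mul, htr, one_mul, ha, Real.log_inv, hL1def, neg_neg]
  have hent1 := hEnt1 K₁ h1 hMK
  have hent2 := hEnt1 K₂ h2 hMK2
  -- entropy of the Hadamard product
  have hab : a - b = ((C:ℝ)-1)⁻¹^2 := by
    rw [ha, hb]; field_simp; ring
  have hab' : a - b ≠ 0 := by
    rw [hab]; positivity
  set p : ℝ := (a * Real.log a - b * Real.log b) / (a - b) with hp
  set q : ℝ := a * Real.log a - p * a with hq
  have hEntP : matEnt (K₁ ⊙ K₂) h12 = -(p + q * C) := by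
    have hquad : ∀ i, h12.eigenvalues i ^ 2 = (a + b) * h12.eigenvalues i + (-(a*b)) := by
      intro i
      refine eig_quad h12 (a+b) (-(a*b)) ?_ i
      rw [hMP]
      have e1 : (((1+((C:ℝ)-1)*(α^2)) + (1-(α^2)))/C) = a + b := by
        rw [hα, ha, hb]; field_simp; try ring
      have e2 : (-((1+((C:ℝ)-1)*(α^2))*(1-(α^2)))/(C:ℝ)^2) = -(a*b) := by
        rw [hα, ha, hb]; field_simp; try ring
      rw [scaled_sq C hC0 (α^2), e1, e2]
    have hcases : ∀ i, h12.eigenvalues i = a ∨ h12.eigenvalues i = b := by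
      intro i
      have h := hquad i
      have : (h12.eigenvalues i - a) * (h12.eigenvalues i - b) = 0 := by linear_combination h
      rcases mul_eq_zero.mp this with h' | h'
      · exact Or.inl (by linarith [sub_eq_zero.mp h'])
      · exact Or.inr (by linarith [sub_eq_zero.mp h'])
    have htr : ∑ i, h12.eigenvalues i = 1 := by
      rw [← trace_eq_sum_eig h12, hMP, Matrix.trace_smul, simplexE_trace]
      simp [hC0]
    have hpa : p * a + q = a * Real.log a := by rw [hq]; ring
    have hpb : p * b + q = b * Real.log b := by
      rw [hq, hp]
      field_simp
      ring
    have hsum : ∑ i, h12.eigenvalues i * Real.log (h12.eigenvalues i)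
        = ∑ i, (p * h12.eigenvalues i + q) := by
      refine Finset.sum_congr rfl fun i _ => ?_
      rcases hcases i with h' | h' <;> rw [h']
      · exact hpa.symm
      · exact hpb.symm
    rw [matEnt, hsum, Finset.sum_add_distrib, ← Finset.mul_sum, htr, mul_one,
      Finset.sum_const, Finset.card_univ, Fintype.card_fin, nsmul_eq_mul]
    ring
  -- final computation
  rw [hent1, hent2, hEntP, min_self]
  have hloga : Real.log a = -L1 := by rw [ha, Real.log_inv, hL1def]
  have hlogb : Real.log b = L2 - 2 * L1 := by
    rw [hb, Real.log_div hc2' (by positivity), Real.log_pow, hL1def, hL2def]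
    push_cast; ring
  have hpq : p + q * C = (((C:ℝ)-2)*L2 - (2*(C:ℝ)-3)*L1)/((C:ℝ)-1) := by
    rw [hq, hp, hloga, hlogb, hab, ha, hb]
    field_simp
    ring
  rw [hpq]
  field_simp [hc1', hL1]
  ring
end

section
/- Let Y ∈ ℝ^{m×N}, Z₁ ∈ ℝ^{d'×N}, Z₂ ∈ ℝ^{d×N}, and let (W₁*, b₁*) minimize ‖Y − (W Z₁ + b 𝟙ᵀ_N)‖_F over W ∈ ℝ^{m×d'}, b ∈ ℝ^m. Then min over (W,b) of ‖Y − (W Z₂ + b 𝟙ᵀ_N)‖_F ≤ min over (W,b) of ‖Y − (W Z₁ + b 𝟙ᵀ_N)‖_F + ‖W₁*‖_F · min over (H,η) of ‖Z₁ − (H Z₂ + η 𝟙ᵀ_N)‖_F. -/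
/-- Frobenius norm of a real matrix. -/
noncomputable def frobNorm {m n : Type*} [Fintype m] [Fintype n] (A : Matrix m n ℝ) : ℝ :=
  Real.sqrt (∑ i, ∑ j, (A i j) ^ 2)

/-- The bias matrix b·𝟙ᵀ_N with column vector b repeated N times. -/
def biasMat {m n : Type*} (b : m → ℝ) : Matrix m n ℝ :=
  Matrix.vecMulVec b (fun _ => 1)

lemma frobNorm_nonneg {m n : Type*} [Fintype m] [Fintype n] (A : Matrix m n ℝ) :
    0 ≤ frobNorm A := Real.sqrt_nonneg _

lemma frobNorm_eq_norm {m n : Type*} [Fintype m] [Fintype n] (A : Matrix m n ℝ) :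
    frobNorm A = ‖(WithLp.equiv 2 ((m × n) → ℝ)).symm (fun p => A p.1 p.2)‖ := by
  rw [EuclideanSpace.norm_eq]
  simp [frobNorm, Fintype.sum_prod_type, sq_abs]

lemma frobNorm_add_le {m n : Type*} [Fintype m] [Fintype n] (A B : Matrix m n ℝ) :
    frobNorm (A + B) ≤ frobNorm A + frobNorm B := by
  rw [frobNorm_eq_norm, frobNorm_eq_norm, frobNorm_eq_norm]
  exact norm_add_le (E := EuclideanSpace ℝ (m × n))
    ((WithLp.equiv 2 ((m × n) → ℝ)).symm (fun p => A p.1 p.2))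
    ((WithLp.equiv 2 ((m × n) → ℝ)).symm (fun p => B p.1 p.2))

lemma frobNorm_mul_le {m k n : Type*} [Fintype m] [Fintype k] [Fintype n]
    (W : Matrix m k ℝ) (E : Matrix k n ℝ) :
    frobNorm (W * E) ≤ frobNorm W * frobNorm E := by
  unfold frobNorm
  rw [← Real.sqrt_mul (by positivity)]
  apply Real.sqrt_le_sqrt
  calc ∑ i, ∑ j, ((W * E) i j) ^ 2
      ≤ ∑ i, ∑ j, (∑ l, (W i l) ^ 2) * (∑ l, (E l j) ^ 2) := by
        apply Finset.sum_le_sum; intro i _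
        apply Finset.sum_le_sum; intro j _
        simpa [Matrix.mul_apply] using
          Finset.sum_mul_sq_le_sq_mul_sq Finset.univ (fun l => W i l) (fun l => E l j)
    _ = (∑ i, ∑ l, (W i l) ^ 2) * (∑ l, ∑ j, (E l j) ^ 2) := by
        rw [Finset.sum_mul_sum]
        congr 1; ext i
        rw [← Finset.mul_sum, ← Finset.mul_sum, Finset.sum_comm]

/-- Lemma 4.3: if (W₁*, b₁*) minimizes the regression of Z₁ to Y, (W₂*, b₂*) minimizes the
regression of Z₂ to Y, and (H*, η*) minimizes the regression of Z₂ to Z₁, then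
min ‖Y − (W Z₂ + b𝟙ᵀ)‖_F ≤ min ‖Y − (W Z₁ + b𝟙ᵀ)‖_F + ‖W₁*‖_F · min ‖Z₁ − (H Z₂ + η𝟙ᵀ)‖_F. -/
theorem regression_error_transfer {m d' d N : ℕ}
    (Y : Matrix (Fin m) (Fin N) ℝ)
    (Z₁ : Matrix (Fin d') (Fin N) ℝ) (Z₂ : Matrix (Fin d) (Fin N) ℝ)
    (W₁ : Matrix (Fin m) (Fin d') ℝ) (b₁ : Fin m → ℝ)
    (hW₁ : ∀ (W : Matrix (Fin m) (Fin d') ℝ) (b : Fin m → ℝ),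
      frobNorm (Y - (W₁ * Z₁ + biasMat b₁)) ≤ frobNorm (Y - (W * Z₁ + biasMat b)))
    (W₂ : Matrix (Fin m) (Fin d) ℝ) (b₂ : Fin m → ℝ)
    (hW₂ : ∀ (W : Matrix (Fin m) (Fin d) ℝ) (b : Fin m → ℝ),
      frobNorm (Y - (W₂ * Z₂ + biasMat b₂)) ≤ frobNorm (Y - (W * Z₂ + biasMat b)))
    (H : Matrix (Fin d') (Fin d) ℝ) (η : Fin d' → ℝ)
    (hH : ∀ (H' : Matrix (Fin d') (Fin d) ℝ) (η' : Fin d' → ℝ),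
      frobNorm (Z₁ - (H * Z₂ + biasMat η)) ≤ frobNorm (Z₁ - (H' * Z₂ + biasMat η'))) :
    frobNorm (Y - (W₂ * Z₂ + biasMat b₂)) ≤
      frobNorm (Y - (W₁ * Z₁ + biasMat b₁))
        + frobNorm W₁ * frobNorm (Z₁ - (H * Z₂ + biasMat η)) := by
  have key : Y - ((W₁ * H) * Z₂ + biasMat (Matrix.mulVec W₁ η + b₁)) =
      (Y - (W₁ * Z₁ + biasMat b₁)) + W₁ * (Z₁ - (H * Z₂ + biasMat η)) := by
    have hb : W₁ * (biasMat η : Matrix (Fin d') (Fin N) ℝ) =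
        (biasMat (Matrix.mulVec W₁ η) : Matrix (Fin m) (Fin N) ℝ) := by
      ext i j
      simp [Matrix.mul_apply, biasMat, Matrix.vecMulVec, Matrix.mulVec, dotProduct]
    have : (biasMat (Matrix.mulVec W₁ η + b₁) : Matrix (Fin m) (Fin N) ℝ) =
        biasMat (Matrix.mulVec W₁ η) + biasMat b₁ := by
      ext i j; simp [biasMat, Matrix.vecMulVec]
    rw [this, ← hb]
    simp only [Matrix.mul_sub, Matrix.mul_add, Matrix.mul_assoc]
    abel
  calc frobNorm (Y - (W₂ * Z₂ + biasMat b₂))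
      ≤ frobNorm (Y - ((W₁ * H) * Z₂ + biasMat (Matrix.mulVec W₁ η + b₁))) := hW₂ _ _
    _ = frobNorm ((Y - (W₁ * Z₁ + biasMat b₁)) + W₁ * (Z₁ - (H * Z₂ + biasMat η))) := by
        rw [key]
    _ ≤ frobNorm (Y - (W₁ * Z₁ + biasMat b₁)) + frobNorm (W₁ * (Z₁ - (H * Z₂ + biasMat η))) :=
        frobNorm_add_le _ _
    _ ≤ _ := by
        gcongr
        exact frobNorm_mul_le _ _
end

section
/- Let Z₁ ∈ ℝ^{d'×N} and Z₂ ∈ ℝ^{d×N} with rank(Z₁) > rank(Z₂). Let σ₁ ≥ σ₂ ≥ ⋯ ≥ σ_N be the singular values of Z₁/√N. Then for all H ∈ ℝ^{d'×d} and η ∈ ℝ^{d'}, (1/N)·‖Z₁ − (H Z₂ + η 𝟙ᵀ_N)‖²_F ≥ Σ_{j=rank(Z₂)+2}^{rank(Z₁)} σⱼ². -/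
open Matrix

/- ### Auxiliary lemmas -/

/-- The canonical linear equivalence from plain functions to Euclidean space. -/
noncomputable def toE (N : ℕ) : (Fin N → ℝ) ≃ₗ[ℝ] EuclideanSpace ℝ (Fin N) :=
  (WithLp.linearEquiv 2 ℝ (Fin N → ℝ)).symm

theorem toE_apply {N : ℕ} (x : Fin N → ℝ) (j : Fin N) : toE N x j = x j := rfl

theorem aux_normE {N : ℕ} (x : Fin N → ℝ) : ‖toE N x‖ ^ 2 = ∑ j, x j ^ 2 := by
  rw [EuclideanSpace.norm_eq, Real.sq_sqrt (by positivity)]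
  exact Finset.sum_congr rfl fun j _ => by rw [toE_apply, Real.norm_eq_abs, sq_abs]

theorem aux_parseval {E : Type*} [NormedAddCommGroup E] [InnerProductSpace ℝ E] {ι : Type*}
    [Fintype ι] (b : OrthonormalBasis ι ℝ E) (x : E) :
    ‖x‖ ^ 2 = ∑ i, (inner ℝ (b i) x : ℝ) ^ 2 := by
  rw [← b.repr.norm_map x, EuclideanSpace.norm_eq, Real.sq_sqrt (by positivity)]
  simp [b.repr_apply_apply, Real.norm_eq_abs, sq_abs]

theorem aux_proj_bounds {E : Type*} [NormedAddCommGroup E] [InnerProductSpace ℝ E]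
    (W : Submodule ℝ E) [W.HasOrthogonalProjection] (y : E) :
    ‖y‖ ^ 2 = ‖(W.orthogonalProjectionOnto y : E)‖ ^ 2 + ‖y - W.orthogonalProjectionOnto y‖ ^ 2 := by
  set p : E := ↑(W.orthogonalProjectionOnto y)
  have h : (inner ℝ (y - p) p : ℝ) = 0 :=
    Submodule.starProjection_inner_eq_zero (K := W) y p (Submodule.coe_mem _)
  have hy : y = (y - p) + p := by abel
  calc ‖y‖ ^ 2 = ‖(y - p) + p‖ ^ 2 := by rw [← hy]
    _ = ‖y - p‖ ^ 2 + 2 * (inner ℝ (y - p) p : ℝ) + ‖p‖ ^ 2 := norm_add_sq_real _ _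
    _ = _ := by rw [h]; ring

theorem aux_proj_min {E : Type*} [NormedAddCommGroup E] [InnerProductSpace ℝ E]
    (W : Submodule ℝ E) [W.HasOrthogonalProjection] (y b : E) (hb : b ∈ W) :
    ‖y‖ ^ 2 - ‖(W.orthogonalProjectionOnto y : E)‖ ^ 2 ≤ ‖y - b‖ ^ 2 := by
  set p : E := ↑(W.orthogonalProjectionOnto y)
  have h : (inner ℝ (y - p) (p - b) : ℝ) = 0 :=
    Submodule.starProjection_inner_eq_zero (K := W) y (p - b) (Submodule.sub_mem _ (Submodule.coe_mem _) hb)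
  have hyb : y - b = (y - p) + (p - b) := by abel
  have hpb := aux_proj_bounds W y
  calc ‖y‖ ^ 2 - ‖p‖ ^ 2 = ‖y - p‖ ^ 2 := by rw [hpb]; ring
    _ ≤ ‖y - p‖ ^ 2 + ‖p - b‖ ^ 2 := le_add_of_nonneg_right (by positivity)
    _ = ‖y - b‖ ^ 2 := by rw [hyb, norm_add_sq_real, h]; ring

theorem aux_dot_sum {N : ℕ} {ι : Type*} (s : Finset ι) (v : Fin N → ℝ) (f : ι → Fin N → ℝ) :
    v ⬝ᵥ (∑ l ∈ s, f l) = ∑ l ∈ s, v ⬝ᵥ f l := by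
  simp [dotProduct, Finset.mul_sum]
  rw [Finset.sum_comm]

theorem aux_mulVec_sum {d N : ℕ} {ι : Type*} (s : Finset ι) (M : Matrix (Fin d) (Fin N) ℝ)
    (f : ι → Fin N → ℝ) : M *ᵥ (∑ l ∈ s, f l) = ∑ l ∈ s, M *ᵥ f l := by
  rw [← mulVecLin_apply, map_sum]
  simp [mulVecLin_apply]

theorem aux_quadform {d' N : ℕ} (A : Matrix (Fin d') (Fin N) ℝ) (hherm : (Aᵀ * A).IsHermitian)
    (v : EuclideanSpace ℝ (Fin N)) :
    v ⬝ᵥ ((Aᵀ * A) *ᵥ v) =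
      ∑ l, hherm.eigenvalues l * (hherm.eigenvectorBasis.repr v l) ^ 2 := by
  set b := hherm.eigenvectorBasis with hb
  set c : Fin N → ℝ := fun l => b.repr v l with hc
  have h1 : (v : Fin N → ℝ) = ∑ l, c l • (b l : Fin N → ℝ) := by
    have := (b.sum_repr v).symm
    convert congrArg WithLp.ofLp this using 1
    simp [hc, WithLp.ofLp_sum]
  have h2 : ((Aᵀ * A) *ᵥ (v : Fin N → ℝ))
      = ∑ l, c l • (hherm.eigenvalues l • (b l : Fin N → ℝ)) := by
    conv_lhs => rw [h1]
    rw [aux_mulVec_sum]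
    refine Finset.sum_congr rfl fun l _ => ?_
    have hms : (Aᵀ * A) *ᵥ (c l • (b l : Fin N → ℝ)) = c l • ((Aᵀ * A) *ᵥ (b l : Fin N → ℝ)) :=
      mulVec_smul _ _ _
    rw [hms]
    exact congrArg (c l • ·) (hherm.mulVec_eigenvectorBasis l)
  have hbl : ∀ l, (v : Fin N → ℝ) ⬝ᵥ (b l : Fin N → ℝ) = c l := by
    intro l
    have hr := b.repr_apply_apply v l
    rw [hc]
    dsimp only
    rw [hr]
    simp [PiLp.inner_apply, dotProduct, RCLike.inner_apply, conj_trivial, mul_comm]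
  calc v ⬝ᵥ ((Aᵀ * A) *ᵥ v)
      = ∑ l, v ⬝ᵥ (c l • (hherm.eigenvalues l • (b l : Fin N → ℝ))) := by
        rw [h2, aux_dot_sum]
    _ = ∑ l, hherm.eigenvalues l * c l ^ 2 := by
        refine Finset.sum_congr rfl fun l _ => ?_
        rw [smul_smul, dotProduct_smul, hbl l]
        simp; ring

theorem aux_rows_inner_sq {d' N : ℕ} (A : Matrix (Fin d') (Fin N) ℝ)
    (v : EuclideanSpace ℝ (Fin N)) :
    ∑ i, (inner ℝ v (toE N (A i)) : ℝ) ^ 2 = v ⬝ᵥ ((Aᵀ * A) *ᵥ v) := by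
  have h1 : ∀ i, (inner ℝ v (toE N (A i)) : ℝ) = (A *ᵥ (v : Fin N → ℝ)) i := by
    intro i
    simp [PiLp.inner_apply, RCLike.inner_apply, conj_trivial, mulVec, dotProduct, mul_comm,
      toE_apply]
  simp_rw [h1]
  have h2 : (Aᵀ * A) *ᵥ (v : Fin N → ℝ) = Aᵀ *ᵥ (A *ᵥ v) := by rw [← mulVec_mulVec]
  rw [h2, dotProduct_mulVec, vecMul_transpose]
  simp [dotProduct, sq]

theorem aux_trace_eq_sum_eig {d' N : ℕ} (A : Matrix (Fin d') (Fin N) ℝ)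
    (hherm : (Aᵀ * A).IsHermitian) :
    ∑ i, ∑ j, A i j ^ 2 = ∑ l, hherm.eigenvalues l := by
  have h1 : ∑ i, ∑ j, A i j ^ 2 = (Aᵀ * A).trace := by
    rw [Matrix.trace, Finset.sum_comm]
    simp [Matrix.diag, Matrix.mul_apply, sq]
  have h2 : (Aᵀ * A).trace
      = (Matrix.diagonal (RCLike.ofReal ∘ hherm.eigenvalues) : Matrix (Fin N) (Fin N) ℝ).trace := by
    conv_lhs => rw [hherm.spectral_theorem]
    rw [Unitary.conjStarAlgAut_apply, Matrix.trace_mul_cycle]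
    congr 1
    have hu := (Matrix.mem_unitaryGroup_iff').mp (hherm.eigenvectorUnitary).2
    rw [hu, Matrix.one_mul]
  rw [h1, h2, Matrix.trace_diagonal]
  simp

theorem aux_majorize {σ : ℕ → ℝ} (hσ_anti : Antitone σ) (hσ_nonneg : ∀ j, 0 ≤ σ j)
    {N k : ℕ} (hk : k ≤ N) (s : ℕ → ℝ) (hs0 : ∀ j, 0 ≤ s j) (hs1 : ∀ j, s j ≤ 1)
    (hsum : ∑ j ∈ Finset.range N, s j ≤ (k : ℝ)) :
    ∑ j ∈ Finset.range N, σ j ^ 2 * s j ≤ ∑ j ∈ Finset.range k, σ j ^ 2 := by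
  set g : ℕ → ℝ := fun j => σ j ^ 2 with hg
  have hganti : ∀ {i j : ℕ}, i ≤ j → g j ≤ g i := fun {i j} hij =>
    pow_le_pow_left₀ (hσ_nonneg j) (hσ_anti hij) 2
  have hgnn : ∀ j, 0 ≤ g j := fun j => sq_nonneg _
  have hsplit : ∑ j ∈ Finset.range N, g j * s j
      = ∑ j ∈ Finset.range k, g j * s j + ∑ j ∈ Finset.Ico k N, g j * s j := by
    rw [Finset.range_eq_Ico, ← Finset.sum_Ico_consecutive _ (Nat.zero_le k) hk,
      ← Finset.range_eq_Ico]
  rw [hsplit]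
  have h1 : ∑ j ∈ Finset.Ico k N, g j * s j ≤ g k * ∑ j ∈ Finset.Ico k N, s j := by
    rw [Finset.mul_sum]
    refine Finset.sum_le_sum fun j hj => ?_
    exact mul_le_mul_of_nonneg_right (hganti (Finset.mem_Ico.mp hj).1) (hs0 j)
  have h2 : g k * ∑ j ∈ Finset.Ico k N, s j ≤ g k * ∑ j ∈ Finset.range k, (1 - s j) := by
    refine mul_le_mul_of_nonneg_left ?_ (hgnn k)
    have hcc : ∑ j ∈ Finset.range k, s j + ∑ j ∈ Finset.Ico k N, s j
        = ∑ j ∈ Finset.range N, s j := by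
      rw [show Finset.range k = Finset.Ico 0 k from Finset.range_eq_Ico (a := k),
        Finset.sum_Ico_consecutive _ (Nat.zero_le k) hk, ← Finset.range_eq_Ico]
    have hcard : ∑ j ∈ Finset.range k, (1 - s j) = (k : ℝ) - ∑ j ∈ Finset.range k, s j := by
      rw [Finset.sum_sub_distrib]
      simp
    linarith
  have h3 : g k * ∑ j ∈ Finset.range k, (1 - s j) ≤ ∑ j ∈ Finset.range k, g j * (1 - s j) := by
    rw [Finset.mul_sum]
    refine Finset.sum_le_sum fun j hj => ?_
    have hj' : j ≤ k := le_of_lt (Finset.mem_range.mp hj)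
    exact mul_le_mul_of_nonneg_right (hganti hj') (by linarith [hs1 j])
  have h4 : ∑ j ∈ Finset.range k, g j * s j + ∑ j ∈ Finset.range k, g j * (1 - s j)
      = ∑ j ∈ Finset.range k, g j := by
    rw [← Finset.sum_add_distrib]
    exact Finset.sum_congr rfl fun j _ => by ring
  linarith
set_option maxHeartbeats 1000000 in
/-- Lemma 4.4: if rank(Z₁) > rank(Z₂) and σ₁ ≥ σ₂ ≥ ⋯ are the singular values of Z₁/√N
(given here via the eigenvalues of (Z₁/√N)ᵀ(Z₁/√N), up to a permutation), then for every
H and η, (1/N)·‖Z₁ − (H Z₂ + η𝟙ᵀ_N)‖²_F ≥ Σ_{j=rank(Z₂)+2}^{rank(Z₁)} σⱼ²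
(the sum written with 0-based indices as Σ_{j ∈ [rank(Z₂)+1, rank(Z₁))}). -/
theorem regression_error_lower_bound {d' d N : ℕ}
    (Z₁ : Matrix (Fin d') (Fin N) ℝ) (Z₂ : Matrix (Fin d) (Fin N) ℝ)
    (hrank : Z₂.rank < Z₁.rank)
    (σ : ℕ → ℝ) (hσ_anti : Antitone σ) (hσ_nonneg : ∀ j, 0 ≤ σ j)
    (hσ_zero : ∀ j, N ≤ j → σ j = 0)
    (hherm : (((Real.sqrt N)⁻¹ • Z₁)ᵀ * ((Real.sqrt N)⁻¹ • Z₁)).IsHermitian)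
    (e : Equiv.Perm (Fin N))
    (hσ_sq : ∀ j : Fin N, σ (j : ℕ) ^ 2 = hherm.eigenvalues (e j)) :
    ∀ (H : Matrix (Fin d') (Fin d) ℝ) (η : Fin d' → ℝ),
      ∑ j ∈ Finset.Ico (Z₂.rank + 1) Z₁.rank, σ j ^ 2 ≤
        ((N : ℝ))⁻¹ * frobNorm (Z₁ - (H * Z₂ + biasMat η)) ^ 2 := by
  intro H η
  classical
  set k := Z₂.rank + 1 with hkdef
  have hkr : k ≤ Z₁.rank := hrank
  have hrN : Z₁.rank ≤ N := by simpa using Z₁.rank_le_card_width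
  have hk : k ≤ N := hkr.trans hrN
  set A : Matrix (Fin d') (Fin N) ℝ := (Real.sqrt N)⁻¹ • Z₁ with hAdef
  set C : Matrix (Fin d') (Fin N) ℝ := H * Z₂ + biasMat η with hCdef
  set B : Matrix (Fin d') (Fin N) ℝ := (Real.sqrt N)⁻¹ • C with hBdef
  have hsq : ((Real.sqrt N)⁻¹) ^ 2 = ((N : ℝ))⁻¹ := by
    rw [inv_pow, Real.sq_sqrt (by positivity)]
  -- rewrite the RHS as a sum of squared norms of rows
  have hfrob : ((N : ℝ))⁻¹ * frobNorm (Z₁ - C) ^ 2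
      = ∑ i, ‖toE N (A i) - toE N (B i)‖ ^ 2 := by
    have h1 : frobNorm (Z₁ - C) ^ 2 = ∑ i, ∑ j, (Z₁ - C) i j ^ 2 := by
      rw [frobNorm, Real.sq_sqrt (by positivity)]
    have h3 : ∀ i, ‖toE N (A i) - toE N (B i)‖ ^ 2
        = ((N : ℝ))⁻¹ * ∑ j, (Z₁ - C) i j ^ 2 := by
      intro i
      rw [← map_sub, aux_normE, Finset.mul_sum]
      refine Finset.sum_congr rfl fun j _ => ?_
      have h2 : (A i - B i) j = (Real.sqrt N)⁻¹ * ((Z₁ - C) i j) := by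
        show A i j - B i j = _
        rw [hAdef, hBdef]
        simp [Matrix.sub_apply]
        ring
      rw [h2, mul_pow, hsq]
    rw [h1, Finset.mul_sum]
    exact Finset.sum_congr rfl fun i _ => (h3 i).symm
  -- the subspace W
  set onesv : Fin N → ℝ := (fun _ => (1 : ℝ)) with honesdef
  set W : Submodule ℝ (EuclideanSpace ℝ (Fin N)) :=
    Submodule.span ℝ (Set.range (fun t => toE N (Z₂ t)) ∪ {toE N onesv}) with hWdef
  have hWrank : Module.finrank ℝ W ≤ k := by
    rw [hWdef, Submodule.span_union]
    refine le_trans (Submodule.finrank_add_le_finrank_add_finrank _ _) ?_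
    have e1 : Module.finrank ℝ
        (Submodule.span ℝ (Set.range (fun t => toE N (Z₂ t)))) = Z₂.rank := by
      have hmap : Submodule.span ℝ (Set.range (fun t => toE N (Z₂ t)))
          = Submodule.map ((toE N : (Fin N → ℝ) →ₗ[ℝ] EuclideanSpace ℝ (Fin N)))
              (Submodule.span ℝ (Set.range Z₂)) := by
        rw [Submodule.map_span]
        congr 1
        exact Set.range_comp (⇑(toE N : (Fin N → ℝ) →ₗ[ℝ] EuclideanSpace ℝ (Fin N))) Z₂
      rw [hmap, LinearEquiv.finrank_map_eq]
      exact (rank_eq_finrank_span_row Z₂).symm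
    have e2 : Module.finrank ℝ
        (Submodule.span ℝ ({toE N onesv} : Set (EuclideanSpace ℝ (Fin N)))) ≤ 1 := by
      have := finrank_span_le_card (R := ℝ) ({toE N onesv} : Set (EuclideanSpace ℝ (Fin N)))
      simpa using this
    rw [e1, hkdef]
    omega
  -- rows of B lie in W
  have hmemB : ∀ i, toE N (B i) ∈ W := by
    intro i
    have hBi : B i = (Real.sqrt N)⁻¹ • ((∑ t, H i t • Z₂ t) + η i • onesv) := by
      funext j
      rw [hBdef, hCdef]
      simp [Matrix.mul_apply, biasMat, vecMulVec, honesdef, Finset.sum_apply, mul_comm]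
    rw [hBi, _root_.map_smul, map_add, map_sum, _root_.map_smul]
    simp_rw [_root_.map_smul]
    refine Submodule.smul_mem _ _ (Submodule.add_mem _ ?_ ?_)
    · refine Submodule.sum_mem _ fun t _ => Submodule.smul_mem _ _ ?_
      exact Submodule.subset_span (Set.mem_union_left _ (Set.mem_range_self t))
    · exact Submodule.smul_mem _ _
        (Submodule.subset_span (Set.mem_union_right _ (Set.mem_singleton _)))
  set b := hherm.eigenvectorBasis with hbdef
  set lam := hherm.eigenvalues with hlamdef
  -- total sum of eigenvalues
  have hsum_lam : ∑ j ∈ Finset.range N, σ j ^ 2 = ∑ l, lam l := by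
    rw [← Fin.sum_univ_eq_sum_range (fun j => σ j ^ 2)]
    rw [show (∑ j : Fin N, σ (j : ℕ) ^ 2) = ∑ j : Fin N, lam (e j) from
      Finset.sum_congr rfl fun j _ => hσ_sq j]
    exact Equiv.sum_comp e lam
  have hsumA : ∑ i, ‖toE N (A i)‖ ^ 2 = ∑ l, lam l := by
    simp_rw [aux_normE]
    exact aux_trace_eq_sum_eig A hherm
  -- key quadratic form identity
  have hkey : ∀ v : EuclideanSpace ℝ (Fin N),
      ∑ i, (inner ℝ v (toE N (A i)) : ℝ) ^ 2 = ∑ m, lam m * (b.repr v m) ^ 2 :=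
    fun v => (aux_rows_inner_sq A v).trans (aux_quadform A hherm v)
  -- quantities t m
  set t : Fin N → ℝ :=
    fun m => ‖((W.orthogonalProjectionOnto (b m) : EuclideanSpace ℝ (Fin N)))‖ ^ 2 with htdef
  have ht0 : ∀ m, 0 ≤ t m := fun m => by positivity
  have ht1 : ∀ m, t m ≤ 1 := by
    intro m
    have hpb := aux_proj_bounds W (b m)
    have hnb : ‖b m‖ = 1 := b.orthonormal.1 m
    have hn2 : (0:ℝ) ≤ ‖(b m : EuclideanSpace ℝ (Fin N)) - W.orthogonalProjectionOnto (b m)‖ ^ 2 :=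
      sq_nonneg _
    rw [htdef]
    dsimp only
    nlinarith [hpb, hnb]
  -- self-adjointness helper
  have hsadj : ∀ (u v : EuclideanSpace ℝ (Fin N)),
      (inner ℝ ((W.orthogonalProjectionOnto u : EuclideanSpace ℝ (Fin N))) v : ℝ)
        = inner ℝ u ((W.orthogonalProjectionOnto v : EuclideanSpace ℝ (Fin N))) :=
    fun u v => Submodule.inner_starProjection_left_eq_right W u v
  -- t m as sum over l
  have htm : ∀ m, t m
      = ∑ l, (inner ℝ (b m)
          ((W.orthogonalProjectionOnto (b l) : EuclideanSpace ℝ (Fin N))) : ℝ) ^ 2 := by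
    intro m
    rw [htdef]
    dsimp only
    rw [aux_parseval b]
    refine Finset.sum_congr rfl fun l _ => ?_
    rw [real_inner_comm, hsadj (b m) (b l), real_inner_comm]
  -- sum of t equals finrank W
  have htsum : ∑ m, t m = (Module.finrank ℝ W : ℝ) := by
    set w := stdOrthonormalBasis ℝ W with hwdef
    have hw1 : ∀ m, t m = ∑ u,
        (inner ℝ ((w u : EuclideanSpace ℝ (Fin N)))
          ((W.orthogonalProjectionOnto (b m) : EuclideanSpace ℝ (Fin N))) : ℝ) ^ 2 := by
      intro m
      rw [htdef]
      dsimp only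
      rw [show ‖((W.orthogonalProjectionOnto (b m) : EuclideanSpace ℝ (Fin N)))‖
          = ‖W.orthogonalProjectionOnto (b m)‖ from rfl]
      rw [aux_parseval w (W.orthogonalProjectionOnto (b m))]
      exact Finset.sum_congr rfl fun u _ => rfl
    have hw2 : ∀ u m,
        (inner ℝ ((w u : EuclideanSpace ℝ (Fin N)))
          ((W.orthogonalProjectionOnto (b m) : EuclideanSpace ℝ (Fin N))) : ℝ)
        = inner ℝ ((w u : EuclideanSpace ℝ (Fin N))) (b m) := by
      intro u m
      rw [← hsadj ((w u : EuclideanSpace ℝ (Fin N))) (b m)]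
      congr 1
      rw [Submodule.orthogonalProjectionOnto_mem_subspace_eq_self]
    calc ∑ m, t m = ∑ m, ∑ u,
          (inner ℝ ((w u : EuclideanSpace ℝ (Fin N))) (b m) : ℝ) ^ 2 := by
          refine Finset.sum_congr rfl fun m _ => ?_
          rw [hw1 m]
          exact Finset.sum_congr rfl fun u _ => by rw [hw2]
      _ = ∑ u, ∑ m, (inner ℝ (b m) ((w u : EuclideanSpace ℝ (Fin N))) : ℝ) ^ 2 := by
          rw [Finset.sum_comm]
          exact Finset.sum_congr rfl fun u _ =>
            Finset.sum_congr rfl fun m _ => by rw [real_inner_comm]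
      _ = ∑ _u : Fin (Module.finrank ℝ W), (1 : ℝ) := by
          refine Finset.sum_congr rfl fun u _ => ?_
          rw [← aux_parseval b ((w u : EuclideanSpace ℝ (Fin N)))]
          have hwu : ‖(w u : EuclideanSpace ℝ (Fin N))‖ = 1 := by
            rw [show ‖(w u : EuclideanSpace ℝ (Fin N))‖ = ‖w u‖ from rfl]
            exact w.orthonormal.1 u
          rw [hwu]; norm_num
      _ = (Module.finrank ℝ W : ℝ) := by simp
  -- the projected-sum bound
  have hsumP : ∑ i, ‖((W.orthogonalProjectionOnto (toE N (A i)))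
        : EuclideanSpace ℝ (Fin N))‖ ^ 2 ≤ ∑ j ∈ Finset.range k, σ j ^ 2 := by
    have e2 : ∑ i, ‖((W.orthogonalProjectionOnto (toE N (A i)))
          : EuclideanSpace ℝ (Fin N))‖ ^ 2 = ∑ m, lam m * t m := by
      calc ∑ i, ‖((W.orthogonalProjectionOnto (toE N (A i))) : EuclideanSpace ℝ (Fin N))‖ ^ 2
          = ∑ i, ∑ l, (inner ℝ ((W.orthogonalProjectionOnto (b l) : EuclideanSpace ℝ (Fin N)))
              (toE N (A i)) : ℝ) ^ 2 := by
            refine Finset.sum_congr rfl fun i _ => ?_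
            rw [aux_parseval b]
            exact Finset.sum_congr rfl fun l _ => by rw [hsadj (b l) _]
        _ = ∑ l, ∑ i, (inner ℝ ((W.orthogonalProjectionOnto (b l) : EuclideanSpace ℝ (Fin N)))
              (toE N (A i)) : ℝ) ^ 2 := Finset.sum_comm
        _ = ∑ l, ∑ m, lam m *
              (b.repr ((W.orthogonalProjectionOnto (b l) : EuclideanSpace ℝ (Fin N))) m) ^ 2 :=
            Finset.sum_congr rfl fun l _ => hkey _
        _ = ∑ m, lam m * t m := by
            rw [Finset.sum_comm]
            refine Finset.sum_congr rfl fun m _ => ?_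
            rw [← Finset.mul_sum]
            congr 1
            rw [htm m]
            exact Finset.sum_congr rfl fun l _ => by rw [b.repr_apply_apply]
    -- reindex through e
    set s : ℕ → ℝ := fun j => if h : j < N then t (e ⟨j, h⟩) else 0 with hsdef
    have hsagree : ∀ j : Fin N, s (j : ℕ) = t (e j) := by
      intro j
      rw [hsdef]
      simp only [j.isLt, dif_pos]
    have hms : ∑ m, lam m * t m = ∑ j ∈ Finset.range N, σ j ^ 2 * s j := by
      rw [← Fin.sum_univ_eq_sum_range (fun j => σ j ^ 2 * s j)]
      rw [← Equiv.sum_comp e (fun m => lam m * t m)]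
      refine Finset.sum_congr rfl fun j _ => ?_
      rw [hσ_sq j, hsagree j]
    have hs0 : ∀ j, 0 ≤ s j := by
      intro j
      rw [hsdef]
      by_cases h : j < N
      · simp only [dif_pos h]; exact ht0 _
      · simp only [dif_neg h]
        exact le_rfl
    have hs1 : ∀ j, s j ≤ 1 := by
      intro j
      rw [hsdef]
      by_cases h : j < N
      · simp only [dif_pos h]; exact ht1 _
      · simp only [dif_neg h]; norm_num
    have hssum : ∑ j ∈ Finset.range N, s j ≤ (k : ℝ) := by
      have h7 : ∑ j ∈ Finset.range N, s j = ∑ m, t m := by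
        rw [← Fin.sum_univ_eq_sum_range s]
        rw [show (∑ j : Fin N, s (j : ℕ)) = ∑ j : Fin N, t (e j) from
          Finset.sum_congr rfl fun j _ => hsagree j]
        exact Equiv.sum_comp e t
      rw [h7, htsum]
      exact_mod_cast hWrank
    rw [e2, hms]
    exact aux_majorize hσ_anti hσ_nonneg hk s hs0 hs1 hssum
  -- assemble
  rw [hfrob]
  have hptw : ∑ i, (‖toE N (A i)‖ ^ 2
        - ‖((W.orthogonalProjectionOnto (toE N (A i))) : EuclideanSpace ℝ (Fin N))‖ ^ 2)
      ≤ ∑ i, ‖toE N (A i) - toE N (B i)‖ ^ 2 :=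
    Finset.sum_le_sum fun i _ => aux_proj_min W _ _ (hmemB i)
  rw [Finset.sum_sub_distrib] at hptw
  have h5 : ∑ j ∈ Finset.Ico k Z₁.rank, σ j ^ 2 ≤ ∑ j ∈ Finset.Ico k N, σ j ^ 2 :=
    Finset.sum_le_sum_of_subset_of_nonneg (Finset.Ico_subset_Ico le_rfl hrN)
      (fun j _ _ => sq_nonneg _)
  have h6 : ∑ j ∈ Finset.Ico k N, σ j ^ 2
      = ∑ j ∈ Finset.range N, σ j ^ 2 - ∑ j ∈ Finset.range k, σ j ^ 2 := by
    rw [Finset.sum_Ico_eq_sub _ hk]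
  linarith
end

section
/- Under a class-balanced dataset with n = C·n₁ samples where each sample's feature equals its class mean and the class-mean Gram matrix is the simplex ETF (E(−1/(C−1))), the n×n sample Gram matrix G = E(−1/(C−1)) ⊗ J_{n₁} (scaled by 1/n for entropy) has matrix entropy H(G) = log(C−1). -/
open Kronecker
open Matrix

/-- The n₁×n₁ all-ones matrix. -/
def allOnes (n₁ : ℕ) : Matrix (Fin n₁) (Fin n₁) ℝ :=
  Matrix.of fun _ _ => 1

lemma trace_eq_sum_eigenvalues {m : Type*} [Fintype m] [DecidableEq m]
    {A : Matrix m m ℝ} (hA : A.IsHermitian) :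
    A.trace = ∑ i, hA.eigenvalues i := by
  conv_lhs => rw [hA.spectral_theorem]
  rw [Unitary.conjStarAlgAut_apply, Matrix.trace_mul_cycle, (Matrix.mem_unitaryGroup_iff').mp hA.eigenvectorUnitary.2,
    one_mul]
  simp [Matrix.trace_diagonal]

lemma eigenvalue_sq {m : Type*} [Fintype m] [DecidableEq m]
    {A : Matrix m m ℝ} (hA : A.IsHermitian) {c : ℝ} (hsq : A * A = c • A) (i : m) :
    hA.eigenvalues i = 0 ∨ hA.eigenvalues i = c := by
  set v := ⇑(hA.eigenvectorBasis i) with hv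
  have hv0 : v ≠ 0 := (WithLp.ofLp_eq_zero 2).ne.2 <| hA.eigenvectorBasis.orthonormal.ne_zero i
  have h1 : (A * A) *ᵥ v = (hA.eigenvalues i * hA.eigenvalues i) • v := by
    rw [← Matrix.mulVec_mulVec, hA.mulVec_eigenvectorBasis, Matrix.mulVec_smul,
      hA.mulVec_eigenvectorBasis, smul_smul]
  have h2 : (A * A) *ᵥ v = (c * hA.eigenvalues i) • v := by
    rw [hsq, Matrix.smul_mulVec, hA.mulVec_eigenvectorBasis, smul_smul]
  have h3 : hA.eigenvalues i * hA.eigenvalues i = c * hA.eigenvalues i := by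
    have h4 : (hA.eigenvalues i * hA.eigenvalues i - c * hA.eigenvalues i) • v = 0 := by
      rw [sub_smul, ← h1, ← h2, sub_self]
    rcases smul_eq_zero.mp h4 with h5 | h5
    · linarith
    · exact absurd h5 hv0
  rcases eq_or_ne (hA.eigenvalues i) 0 with h0 | h0
  · exact Or.inl h0
  · exact Or.inr (mul_right_cancel₀ h0 h3)

lemma allOnes_mul_allOnes (n : ℕ) : allOnes n * allOnes n = (n : ℝ) • allOnes n := by
  ext i j
  simp [allOnes, Matrix.mul_apply]

lemma simplexE_decomp (C : ℕ) (α : ℝ) :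
    simplexE C α = (1 - α) • (1 : Matrix (Fin C) (Fin C) ℝ) + α • allOnes C := by
  ext i j
  by_cases hij : i = j <;> simp [simplexE, allOnes, Matrix.one_apply, hij]

lemma simplexE_sq_s14 (C : ℕ) (hC : 2 ≤ C) :
    simplexE C (-1 / ((C : ℝ) - 1)) * simplexE C (-1 / ((C : ℝ) - 1)) =
      ((C : ℝ) / ((C : ℝ) - 1)) • simplexE C (-1 / ((C : ℝ) - 1)) := by
  have hC1 : (C : ℝ) - 1 ≠ 0 := by
    have : (2 : ℝ) ≤ C := by exact_mod_cast hC
    linarith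
  have hJ := allOnes_mul_allOnes C
  rw [simplexE_decomp]
  simp only [add_mul, mul_add, smul_mul_assoc, Matrix.mul_smul, one_mul, mul_one, hJ,
    smul_smul, smul_add]
  match_scalars <;> (field_simp; try ring)

/-- In a class-balanced dataset with n = C·n₁ samples where each feature equals its class
mean and the class means form a simplex ETF, the sample Gram matrix is
G = E(−1/(C−1)) ⊗ J_{n₁}, and its matrix entropy is log(C−1). -/
theorem matEnt_sample_gram_neuralCollapse (C n₁ : ℕ) (hC : 2 ≤ C) (hn₁ : 1 ≤ n₁)
    (G : Matrix (Fin C × Fin n₁) (Fin C × Fin n₁) ℝ)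
    (hG : G = simplexE C (-1 / ((C : ℝ) - 1)) ⊗ₖ allOnes n₁)
    (h : (((Fintype.card (Fin C × Fin n₁) : ℝ))⁻¹ • G).IsHermitian) :
    matEnt G h = Real.log ((C : ℝ) - 1) := by
  have hC1 : (1 : ℝ) < (C : ℝ) := by exact_mod_cast Nat.lt_of_lt_of_le one_lt_two hC
  have hC1' : (C : ℝ) - 1 ≠ 0 := by linarith
  have hCpos : (0 : ℝ) < C := by linarith
  have hn₁pos : (0 : ℝ) < n₁ := by exact_mod_cast hn₁
  have hcard : (Fintype.card (Fin C × Fin n₁) : ℝ) = (C : ℝ) * n₁ := by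
    simp [Fintype.card_prod]
  have hnne : ((C : ℝ) * n₁) ≠ 0 := by positivity
  set M : Matrix (Fin C × Fin n₁) (Fin C × Fin n₁) ℝ :=
    ((Fintype.card (Fin C × Fin n₁) : ℝ))⁻¹ • G with hM
  -- M * M = (1/(C-1)) • M
  have hGG : G * G = ((C : ℝ) * n₁ / ((C : ℝ) - 1)) • G := by
    rw [hG, ← Matrix.mul_kronecker_mul, simplexE_sq_s14 C hC, allOnes_mul_allOnes,
      Matrix.smul_kronecker, Matrix.kronecker_smul, smul_smul]
    congr 1
    field_simp
  have hsq : M * M = ((C : ℝ) - 1)⁻¹ • M := by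
    rw [hM, Matrix.smul_mul, Matrix.mul_smul, hGG, smul_smul, smul_smul, smul_smul]
    congr 1
    rw [hcard]
    field_simp
  set c : ℝ := ((C : ℝ) - 1)⁻¹ with hc
  have heig : ∀ i, h.eigenvalues i = 0 ∨ h.eigenvalues i = c := eigenvalue_sq h hsq
  -- trace of M = 1
  have htrG : G.trace = (C : ℝ) * n₁ := by
    rw [hG]
    rw [Matrix.trace]
    simp [Matrix.diag, Matrix.kroneckerMap_apply, simplexE, allOnes, Fintype.sum_prod_type]
  have htr : ∑ i, h.eigenvalues i = 1 := by
    rw [← trace_eq_sum_eigenvalues h, hM, Matrix.trace_smul, htrG, hcard, smul_eq_mul,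
      inv_mul_cancel₀ hnne]
  -- each λ log λ = λ log c
  have hterm : ∀ i, h.eigenvalues i * Real.log (h.eigenvalues i)
      = h.eigenvalues i * Real.log c := by
    intro i
    rcases heig i with h0 | h0 <;> rw [h0] <;> simp
  rw [matEnt]
  calc -∑ i, h.eigenvalues i * Real.log (h.eigenvalues i)
      = -∑ i, h.eigenvalues i * Real.log c := by
        congr 1; exact Finset.sum_congr rfl fun i _ => hterm i
    _ = -((∑ i, h.eigenvalues i) * Real.log c) := by rw [Finset.sum_mul]
    _ = -Real.log c := by rw [htr, one_mul]
    _ = Real.log ((C : ℝ) - 1) := by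
        rw [hc, Real.log_inv, neg_neg]
end
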